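/- For all ϑ > 0, 0 < t < T, and x ∈ ℝ² ∖ {0}: ∫_{ℝ²} g_t(x−y) K₀(√(2ϑ)‖y‖, ϑ(T−t)) dy = e^{ϑ t} · K₀(√(2ϑ)‖x‖, ϑ T). -/

import Mathlib

open MeasureTheory Real

noncomputable section

/-- The plane `ℝ²`. -/
abbrev E2 := EuclideanSpace ℝ (Fin 2)

/-- The two-dimensional Gaussian heat kernel `g_t(x) = (2πt)⁻¹ exp(−‖x‖²/(2t))`. -/
def gauss (t : ℝ) (x : E2) : ℝ := (2 * π * t)⁻¹ * Real.exp (-‖x‖ ^ 2 / (2 * t))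

/-- The incomplete modified Bessel function of order 0,
`K₀(z,y) = (1/2) ∫_y^∞ a⁻¹ exp(−a − z²/(4a)) da`. -/
def besselK0Inc (z y : ℝ) : ℝ :=
  (1 / 2 : ℝ) * ∫ a in Set.Ioi y, a⁻¹ * Real.exp (-a - z ^ 2 / (4 * a))

/-!
Substituting `a = ϑ s` writes `K₀(√(2ϑ)‖w‖, ϑ r)` as the Laplace transform in time of the heat
kernel, `π ∫_r^∞ e^{-ϑ s} g_s(w) ds`. Convolving with `g_t` and exchanging the integrals (for
`r > 0` the integrand is dominated by `g_t(x - y) e^{-ϑ s} / (2πr)`), the semigroup law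
`g_t ∗ g_s = g_{t+s}` leaves `π ∫_r^∞ e^{-ϑ s} g_{t+s}(x) ds`; for `r = T - t` the shift
`u = t + s` turns this into `e^{ϑ t}` times the same representation at level `T`.
-/

open Set

theorem integrable_exp_neg_mul_sq_norm {V : Type*} [NormedAddCommGroup V] [InnerProductSpace ℝ V]
    [FiniteDimensional ℝ V] [MeasurableSpace V] [BorelSpace V] {b : ℝ} (hb : 0 < b) :
    Integrable (fun v : V => rexp (-b * ‖v‖ ^ 2)) :=
  Integrable.of_integral_ne_zero <| by
    rw [GaussianFourier.integral_rexp_neg_mul_sq_norm hb]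
    positivity

theorem integral_exp_neg_mul_sq_norm_plane {b : ℝ} (hb : 0 < b) :
    ∫ y : E2, rexp (-b * ‖y‖ ^ 2) = π / b := by
  rw [GaussianFourier.integral_rexp_neg_mul_sq_norm hb]
  norm_num [finrank_euclideanSpace_fin]

theorem gauss_nonneg {t : ℝ} (ht : 0 ≤ t) (x : E2) : 0 ≤ gauss t x := by
  unfold gauss
  positivity

theorem gauss_le {t : ℝ} (ht : 0 ≤ t) (x : E2) : gauss t x ≤ (2 * π * t)⁻¹ := by
  unfold gauss
  refine mul_le_of_le_one_right (by positivity) (exp_le_one_iff.2 ?_)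
  rw [neg_div]
  exact neg_nonpos.2 (by positivity)

theorem integrable_gauss {t : ℝ} (ht : 0 < t) : Integrable (gauss t) := by
  have h : gauss t = fun y : E2 => (2 * π * t)⁻¹ * rexp (-(2 * t)⁻¹ * ‖y‖ ^ 2) := by
    ext y
    rw [gauss, neg_div, div_eq_inv_mul, neg_mul]
  rw [h]
  exact (integrable_exp_neg_mul_sq_norm (by positivity)).const_mul _

theorem gauss_sub_mul_gauss {t s : ℝ} (ht : 0 < t) (hs : 0 < s) (x y : E2) :
    gauss t (x - y) * gauss s y
      = (2 * π * t)⁻¹ * (2 * π * s)⁻¹ * rexp (-‖x‖ ^ 2 / (2 * (t + s))) *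
        rexp (-((t + s) / (2 * t * s)) * ‖y - (s / (t + s)) • x‖ ^ 2) := by
  have completed_square : -‖x - y‖ ^ 2 / (2 * t) + -‖y‖ ^ 2 / (2 * s)
      = -‖x‖ ^ 2 / (2 * (t + s)) + -((t + s) / (2 * t * s)) * ‖y - (s / (t + s)) • x‖ ^ 2 := by
    rw [norm_sub_sq_real x y, norm_sub_sq_real y, real_inner_smul_right, real_inner_comm,
      norm_smul, mul_pow, Real.norm_eq_abs, sq_abs]
    field_simp
    ring
  rw [gauss, gauss, mul_mul_mul_comm, ← exp_add, completed_square, exp_add]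
  ring

theorem integral_gauss_sub_mul_gauss {t s : ℝ} (ht : 0 < t) (hs : 0 < s) (x : E2) :
    ∫ y : E2, gauss t (x - y) * gauss s y = gauss (t + s) x := by
  simp_rw [gauss_sub_mul_gauss ht hs x]
  rw [integral_const_mul,
    integral_sub_right_eq_self (fun y : E2 => rexp (-((t + s) / (2 * t * s)) * ‖y‖ ^ 2)),
    integral_exp_neg_mul_sq_norm_plane (by positivity), gauss]
  field_simp

theorem besselK0Inc_eq_integral_gauss {ϑ r : ℝ} (hϑ : 0 < ϑ) (hr : 0 ≤ r) (w : E2) :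
    besselK0Inc (√(2 * ϑ) * ‖w‖) (ϑ * r) = π * ∫ s in Ioi r, rexp (-ϑ * s) * gauss s w := by
  rw [besselK0Inc, mul_pow, sq_sqrt (by positivity), ← integral_comp_mul_left_Ioi' _ _ hϑ,
    smul_eq_mul, ← integral_const_mul, ← integral_const_mul, ← integral_const_mul]
  refine setIntegral_congr_fun measurableSet_Ioi fun s hs => ?_
  have hs : 0 < s := hr.trans_lt hs
  have exponent : -(ϑ * s) - 2 * ϑ * ‖w‖ ^ 2 / (4 * (ϑ * s)) = -ϑ * s + -‖w‖ ^ 2 / (2 * s) := by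
    field_simp
    ring
  rw [exponent, exp_add, gauss]
  field_simp

theorem integrable_gauss_sub_mul_exp_mul_gauss {ϑ t r : ℝ} (hϑ : 0 < ϑ) (ht : 0 < t) (hr : 0 < r)
    (x : E2) :
    Integrable (fun p : E2 × ℝ => gauss t (x - p.1) * (rexp (-ϑ * p.2) * gauss p.2 p.1))
      (volume.prod (volume.restrict (Ioi r))) := by
  have dominant := ((integrable_gauss ht).comp_sub_left x).mul_prod
    ((exp_neg_integrableOn_Ioi r hϑ).const_mul (2 * π * r)⁻¹)
  refine dominant.mono' (by unfold gauss; fun_prop) ?_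
  filter_upwards [Measure.quasiMeasurePreserving_snd.ae (ae_restrict_mem measurableSet_Ioi)]
    with ⟨y, s⟩ (hrs : r < s)
  have hs := hr.trans hrs
  have hgt := gauss_nonneg ht.le (x - y)
  have hgs := gauss_nonneg hs.le y
  rw [norm_of_nonneg (by positivity), mul_comm (2 * π * r)⁻¹]
  refine mul_le_mul_of_nonneg_left (mul_le_mul_of_nonneg_left ?_ (by positivity)) hgt
  exact (gauss_le hs.le y).trans (by gcongr)

theorem integral_gauss_sub_mul_laplace_gauss {ϑ t r : ℝ} (hϑ : 0 < ϑ) (ht : 0 < t) (hr : 0 < r)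
    (x : E2) :
    ∫ y : E2, gauss t (x - y) * ∫ s in Ioi r, rexp (-ϑ * s) * gauss s y
      = ∫ s in Ioi r, rexp (-ϑ * s) * gauss (t + s) x := by
  simp_rw [← integral_const_mul]
  rw [integral_integral_swap (integrable_gauss_sub_mul_exp_mul_gauss hϑ ht hr x)]
  refine setIntegral_congr_fun measurableSet_Ioi fun s hs => ?_
  simp_rw [mul_left_comm (gauss t _)]
  rw [integral_const_mul, integral_gauss_sub_mul_gauss ht (hr.trans hs)]

theorem setIntegral_Ioi_exp_mul_comp_add (f : ℝ → ℝ) (ϑ t T : ℝ) :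
    ∫ s in Ioi (T - t), rexp (-ϑ * s) * f (t + s)
      = rexp (ϑ * t) * ∫ u in Ioi T, rexp (-ϑ * u) * f u := by
  have shift := (measurePreserving_add_right volume t).setIntegral_preimage_emb
    (MeasurableEquiv.addRight t).measurableEmbedding (fun u => rexp (-ϑ * (u - t)) * f u) (Ioi T)
  rw [preimage_add_const_Ioi] at shift
  simp_rw [add_sub_cancel_right] at shift
  rw [← integral_const_mul]
  simp_rw [add_comm t, shift, ← mul_assoc, ← exp_add]
  congr 1 with u
  ring_nf

theorem gauss_conv_besselK0Inc_general (ϑ t T : ℝ) (hϑ : 0 < ϑ) (ht : 0 < t) (htT : t < T)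
    (x : E2) :
    (∫ y : E2, gauss t (x - y) * besselK0Inc (Real.sqrt (2 * ϑ) * ‖y‖) (ϑ * (T - t)))
      = Real.exp (ϑ * t) * besselK0Inc (Real.sqrt (2 * ϑ) * ‖x‖) (ϑ * T) := by
  have hr : 0 < T - t := by linarith
  simp_rw [besselK0Inc_eq_integral_gauss hϑ hr.le,
    besselK0Inc_eq_integral_gauss hϑ (ht.trans htT).le, mul_left_comm (gauss t _),
    integral_const_mul, integral_gauss_sub_mul_laplace_gauss hϑ ht hr,
    setIntegral_Ioi_exp_mul_comp_add (fun u => gauss u x)]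
  ring

/-- For `ϑ > 0`, `0 < t < T` and `x ≠ 0`,
`∫ g_t(x−y) K₀(√(2ϑ)‖y‖, ϑ(T−t)) dy = e^{ϑt} K₀(√(2ϑ)‖x‖, ϑT)`. -/
theorem gauss_conv_besselK0Inc (ϑ t T : ℝ) (hϑ : 0 < ϑ) (ht : 0 < t) (htT : t < T)
    (x : E2) (hx : x ≠ 0) :
    (∫ y : E2, gauss t (x - y) * besselK0Inc (Real.sqrt (2 * ϑ) * ‖y‖) (ϑ * (T - t)))
      = Real.exp (ϑ * t) * besselK0Inc (Real.sqrt (2 * ϑ) * ‖x‖) (ϑ * T) :=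
  gauss_conv_besselK0Inc_general ϑ t T hϑ ht htT x
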